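/- arXiv:math/0411262 — 2 statements merged into one kernel-verified Lean document; each statement's English description precedes it below -/
import Mathlib

section
/- Let q be a power of a prime p and let B be a commutative 𝔽_q-algebra, complete with respect to a nonarchimedean ring norm ‖·‖. Let r, m ≥ 1, let Δ₀ ∈ M_r(B) with ‖Δ₀‖ ≤ 1, and let Ψ ∈ M_{r×m}(B) with ‖Ψ‖ < 1. Then the series Φ := ∑_{ν=0}^{∞} Δ₀ · Δ₀^{[q]} · Δ₀^{[q²]} ⋯ Δ₀^{[q^{ν−1}]} · Ψ^{[q^ν]} converges in M_{r×m}(B), it satisfies Φ − Δ₀·Φ^{[q]} = Ψ and ‖Φ‖ = ‖Ψ‖, and Φ is the unique solution of the equation X − Δ₀·X^{[q]} = Ψ with ‖X‖ < 1. -/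
/-- The supremum norm of a matrix: the maximum of the norms of its entries. -/
noncomputable def matNorm {ι κ : Type*} [Fintype ι] [Fintype κ] {B : Type*} [Norm B]
    (M : Matrix ι κ B) : ℝ :=
  ⨆ i, ⨆ j, ‖M i j‖

/-!
The map `L X = Δ₀ · X^{[q]}` is additive because `x ↦ x^q` is the `n`-th power of Frobenius, and
the nonarchimedean estimates together with `‖Δ₀‖ ≤ 1` give `‖L X‖ ≤ ‖X‖^q`. The `ν`-th term of the
series is `L^ν Ψ`, of norm at most `‖Ψ‖^{q^ν}`, so the series converges and its sum satisfies
`Φ = Ψ + L Φ`. As `‖L Φ‖ ≤ ‖Ψ‖^q < ‖Ψ‖`, the ultrametric inequality gives `‖Φ‖ = ‖Ψ‖`. The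
difference `D` of two solutions of norm `< 1` is a fixed point of `L` with `‖D‖ < 1`, so
`‖D‖ ≤ ‖D‖^q` forces `D = 0`.
-/

section IterateSeries

variable {E : Type*} [NormedAddCommGroup E] {L : E →+ E} {q : ℕ}

lemma norm_iterate_le_pow (hL : ∀ x, ‖L x‖ ≤ ‖x‖ ^ q) (x : E) (ν : ℕ) :
    ‖L^[ν] x‖ ≤ ‖x‖ ^ q ^ ν := by
  induction ν with
  | zero => simp
  | succ ν ih =>
    rw [Function.iterate_succ_apply', pow_succ, pow_mul]
    exact (hL _).trans (pow_le_pow_left₀ (norm_nonneg _) ih q)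

lemma AddMonoidHom.continuous_of_norm_le_pow (hq : q ≠ 0) (hL : ∀ x, ‖L x‖ ≤ ‖x‖ ^ q) :
    Continuous L := by
  refine continuous_of_continuousAt_zero L ?_
  rw [ContinuousAt, map_zero]
  refine squeeze_zero_norm hL ?_
  exact (continuous_norm.pow q).tendsto' (0 : E) 0 (by simp [hq])

lemma eq_of_sub_map_eq_sub_map [IsUltrametricDist E] (hq : 1 < q)
    (hL : ∀ x, ‖L x‖ ≤ ‖x‖ ^ q) {x y : E} (hx : ‖x‖ < 1) (hy : ‖y‖ < 1)
    (h : x - L x = y - L y) : x = y := by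
  have hfix : L (x - y) = x - y := by
    rw [map_sub]
    exact (sub_eq_sub_iff_sub_eq_sub.1 h).symm
  have hsmall : ‖x - y‖ < 1 := by
    refine lt_of_le_of_lt ?_ (max_lt hx hy)
    simpa [dist_eq_norm] using dist_triangle_max x 0 y
  by_contra hne
  have hpos : 0 < ‖x - y‖ := norm_pos_iff.2 (sub_ne_zero.2 hne)
  have hbound := hL (x - y)
  rw [hfix] at hbound
  exact hbound.not_gt (pow_lt_self_of_lt_one₀ hpos hsmall hq)

variable [CompleteSpace E] {ψ : E}

lemma summable_iterate (hq : 1 < q) (hL : ∀ x, ‖L x‖ ≤ ‖x‖ ^ q) (hψ : ‖ψ‖ < 1) :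
    Summable fun ν => L^[ν] ψ := by
  refine Summable.of_norm_bounded (summable_geometric_of_lt_one (norm_nonneg ψ) hψ) fun ν => ?_
  exact (norm_iterate_le_pow hL ψ ν).trans
    (pow_le_pow_of_le_one (norm_nonneg _) hψ.le (Nat.lt_pow_self hq).le)

lemma tsum_iterate_sub_map (hq : 1 < q) (hL : ∀ x, ‖L x‖ ≤ ‖x‖ ^ q) (hψ : ‖ψ‖ < 1) :
    (∑' ν, L^[ν] ψ) - L (∑' ν, L^[ν] ψ) = ψ := by
  have hsum := (summable_iterate hq hL hψ).hasSum
  have hshift : HasSum (fun ν => L^[ν + 1] ψ) (L (∑' ν, L^[ν] ψ)) := by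
    simpa only [Function.iterate_succ_apply', Function.comp_def] using
      hsum.map L (L.continuous_of_norm_le_pow (by omega) hL)
  rw [hshift.unique ((hasSum_nat_add_iff' 1).2 hsum)]
  simp

lemma norm_tsum_iterate [IsUltrametricDist E] (hq : 1 < q) (hL : ∀ x, ‖L x‖ ≤ ‖x‖ ^ q)
    (hψ : ‖ψ‖ < 1) : ‖∑' ν, L^[ν] ψ‖ = ‖ψ‖ := by
  set Φ := ∑' ν, L^[ν] ψ
  have hle : ‖Φ‖ ≤ ‖ψ‖ :=
    IsUltrametricDist.norm_tsum_le_of_forall_le_of_nonneg (norm_nonneg ψ) fun ν =>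
      (norm_iterate_le_pow hL ψ ν).trans
        (pow_le_of_le_one (norm_nonneg _) hψ.le (pow_ne_zero _ (by omega)))
  rcases (norm_nonneg ψ).eq_or_lt with hzero | hpos
  · rw [← hzero] at hle ⊢
    exact le_antisymm hle (norm_nonneg _)
  have hlt : ‖L Φ‖ < ‖ψ‖ :=
    calc ‖L Φ‖ ≤ ‖Φ‖ ^ q := hL Φ
      _ ≤ ‖ψ‖ ^ q := pow_le_pow_left₀ (norm_nonneg _) hle q
      _ < ‖ψ‖ := pow_lt_self_of_lt_one₀ hpos hψ hq
  have hΦ : Φ = ψ + L Φ := by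
    rw [← sub_eq_iff_eq_add]
    exact tsum_iterate_sub_map hq hL hψ
  rw [hΦ, IsUltrametricDist.norm_add_eq_max_of_norm_ne_norm hlt.ne', max_eq_left hlt.le]

end IterateSeries

section TwistedMul

variable {R : Type*} [Semiring R] {ι κ : Type*} [Fintype ι]

def Matrix.twistedMulLeft (σ : R →+* R) (Δ : Matrix ι ι R) : Matrix ι κ R →+ Matrix ι κ R where
  toFun X := Δ * X.map σ
  map_zero' := by simp
  map_add' X Y := by rw [Matrix.map_add _ (map_add σ), Matrix.mul_add]

lemma Matrix.twistedMulLeft_apply (σ : R →+* R) (Δ : Matrix ι ι R) (X : Matrix ι κ R) :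
    twistedMulLeft σ Δ X = Δ * X.map σ :=
  rfl

lemma Matrix.iterate_twistedMulLeft [DecidableEq ι] (σ : R →+* R) (Δ : Matrix ι ι R)
    (X : Matrix ι κ R) (ν : ℕ) :
    (twistedMulLeft σ Δ)^[ν] X =
      ((List.range ν).map fun k => Δ.map ⇑(σ ^ k)).prod * X.map ⇑(σ ^ ν) := by
  induction ν generalizing X with
  | zero => simp
  | succ ν ih =>
    rw [Function.iterate_succ_apply, ih, twistedMulLeft_apply, Matrix.map_mul, Matrix.map_map,
      List.range_succ, List.map_append, List.prod_append, List.map_singleton, List.prod_singleton,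
      Matrix.mul_assoc, pow_succ, RingHom.coe_mul]

end TwistedMul

attribute [local instance] Matrix.seminormedAddCommGroup Matrix.normedAddCommGroup

section MatrixNorm

variable {ι κ μ : Type*} [Fintype ι] [Fintype κ] [Fintype μ]

lemma matNorm_eq_norm {B : Type*} [SeminormedAddCommGroup B] (M : Matrix ι κ B) :
    matNorm M = ‖M‖ := by
  have hentry (i : ι) (j : κ) : ‖M i j‖ ≤ matNorm M :=
    (le_ciSup (Set.finite_range _).bddAbove j).trans
      (le_ciSup (f := fun i => ⨆ j, ‖M i j‖) (Set.finite_range _).bddAbove i)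
  have hnonneg : 0 ≤ matNorm M :=
    Real.iSup_nonneg fun _ => Real.iSup_nonneg fun _ => norm_nonneg _
  exact le_antisymm
    (Real.iSup_le (fun _ => Real.iSup_le (fun _ => M.norm_entry_le_entrywise_sup_norm)
      (norm_nonneg _)) (norm_nonneg _))
    ((Matrix.norm_le_iff hnonneg).2 hentry)

theorem Matrix.isUltrametricDist {B : Type*} [SeminormedAddCommGroup B] [IsUltrametricDist B] :
    IsUltrametricDist (Matrix ι κ B) :=
  inferInstanceAs (IsUltrametricDist (ι → κ → B))

-- The uniformity must be the one of the sup norm: the global `Matrix` uniform structure is equal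
-- to it, but not reducibly so.
theorem Matrix.completeSpace {B : Type*} [SeminormedAddCommGroup B] [CompleteSpace B] :
    @CompleteSpace (Matrix ι κ B) PseudoMetricSpace.toUniformSpace :=
  inferInstanceAs (CompleteSpace (ι → κ → B))

attribute [local instance] Matrix.isUltrametricDist

lemma Matrix.norm_mul_le_of_isUltrametricDist {R : Type*} [SeminormedRing R]
    [IsUltrametricDist R] (A : Matrix ι κ R) (C : Matrix κ μ R) : ‖A * C‖ ≤ ‖A‖ * ‖C‖ := by
  have hnonneg : 0 ≤ ‖A‖ * ‖C‖ := by positivity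
  refine (Matrix.norm_le_iff hnonneg).2 fun i j => ?_
  rw [Matrix.mul_apply]
  refine IsUltrametricDist.norm_sum_le_of_forall_le_of_nonneg hnonneg fun k _ => ?_
  exact (norm_mul_le _ _).trans (mul_le_mul A.norm_entry_le_entrywise_sup_norm
    C.norm_entry_le_entrywise_sup_norm (norm_nonneg _) (norm_nonneg _))

lemma Matrix.norm_map_le_pow {α β : Type*} [SeminormedAddCommGroup α] [SeminormedAddCommGroup β]
    (M : Matrix ι κ α) {f : α → β} {e : ℕ} (hf : ∀ a, ‖f a‖ ≤ ‖a‖ ^ e) :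
    ‖M.map f‖ ≤ ‖M‖ ^ e :=
  (Matrix.norm_le_iff (by positivity)).2 fun _ _ =>
    (hf _).trans (pow_le_pow_left₀ (norm_nonneg _) M.norm_entry_le_entrywise_sup_norm e)

lemma Matrix.norm_twistedMulLeft_le {R : Type*} [SeminormedRing R] [IsUltrametricDist R]
    {σ : R →+* R} {Δ : Matrix ι ι R} {q : ℕ} (hσ : ∀ a, ‖σ a‖ ≤ ‖a‖ ^ q) (hΔ : ‖Δ‖ ≤ 1)
    (X : Matrix ι κ R) : ‖twistedMulLeft σ Δ X‖ ≤ ‖X‖ ^ q :=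
  calc ‖Δ * X.map σ‖ ≤ ‖Δ‖ * ‖X.map σ‖ := norm_mul_le_of_isUltrametricDist _ _
    _ ≤ 1 * ‖X‖ ^ q := mul_le_mul hΔ (X.norm_map_le_pow hσ) (norm_nonneg _) zero_le_one
    _ = ‖X‖ ^ q := one_mul _

end MatrixNorm

attribute [local instance] Matrix.isUltrametricDist Matrix.completeSpace

theorem statement5_general
    (p n q : ℕ) [Fact p.Prime] (hn : n ≠ 0) (hq : q = p ^ n)
    (B : Type) [NormedCommRing B] [NormOneClass B] [IsUltrametricDist B] [CompleteSpace B]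
    [Algebra (GaloisField p n) B]
    (r m : ℕ)
    (Δ₀ : Matrix (Fin r) (Fin r) B) (hΔ₀ : matNorm Δ₀ ≤ 1)
    (Ψ : Matrix (Fin r) (Fin m) B) (hΨ : matNorm Ψ < 1) :
    ∃ Φ : Matrix (Fin r) (Fin m) B,
      Filter.Tendsto
        (fun N => matNorm
          ((∑ ν ∈ Finset.range N,
              ((List.range ν).map (fun k => Δ₀.map (· ^ q ^ k))).prod * Ψ.map (· ^ q ^ ν))
            - Φ))
        Filter.atTop (nhds 0) ∧
      Φ - Δ₀ * Φ.map (· ^ q) = Ψ ∧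
      matNorm Φ = matNorm Ψ ∧
      ∀ X : Matrix (Fin r) (Fin m) B,
        X - Δ₀ * X.map (· ^ q) = Ψ → matNorm X < 1 → X = Φ := by
  have : Nontrivial B := NormOneClass.nontrivial
  have : CharP B p := charP_of_injective_algebraMap (algebraMap (GaloisField p n) B).injective p
  have hq1 : 1 < q := hq ▸ Nat.one_lt_pow hn (Fact.out : p.Prime).one_lt
  set σ := iterateFrobenius B p n
  have hσ_pow (k : ℕ) : ⇑(σ ^ k) = (· ^ q ^ k) := by
    rw [RingHom.coe_pow, hq]
    exact pow_iterate (p ^ n) k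
  set L := Matrix.twistedMulLeft (κ := Fin m) σ Δ₀
  have hL (X : Matrix (Fin r) (Fin m) B) : ‖L X‖ ≤ ‖X‖ ^ q :=
    Matrix.norm_twistedMulLeft_le (fun a => hq ▸ norm_pow_le a (p ^ n))
      ((matNorm_eq_norm Δ₀).symm.trans_le hΔ₀) X
  have hseries (ν : ℕ) : ((List.range ν).map fun k => Δ₀.map (· ^ q ^ k)).prod *
      Ψ.map (· ^ q ^ ν) = L^[ν] Ψ := by
    simp only [L, Matrix.iterate_twistedMulLeft, hσ_pow]
  have hLX (X : Matrix (Fin r) (Fin m) B) : Δ₀ * X.map (· ^ q) = L X := by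
    rw [Matrix.twistedMulLeft_apply, ← pow_one σ, hσ_pow, pow_one]
  rw [matNorm_eq_norm] at hΨ
  simp only [matNorm_eq_norm, hseries, hLX]
  refine ⟨∑' ν, L^[ν] Ψ, ?_, tsum_iterate_sub_map hq1 hL hΨ, norm_tsum_iterate hq1 hL hΨ,
    fun X hX hXnorm => ?_⟩
  · exact tendsto_iff_norm_sub_tendsto_zero.1 (summable_iterate hq1 hL hΨ).hasSum.tendsto_sum_nat
  · exact eq_of_sub_map_eq_sub_map hq1 hL hXnorm ((norm_tsum_iterate hq1 hL hΨ).trans_lt hΨ)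
      (hX.trans (tsum_iterate_sub_map hq1 hL hΨ).symm)

/-- Let `q = pⁿ` and let `B` be a commutative `𝔽_q`-algebra, complete with
respect to a nonarchimedean ring norm.  Let `Δ₀ ∈ M_r(B)` with `‖Δ₀‖ ≤ 1` and
`Ψ ∈ M_{r×m}(B)` with `‖Ψ‖ < 1`.  Then the series
`Φ = ∑_ν Δ₀ Δ₀^{[q]} ⋯ Δ₀^{[q^{ν-1}]} Ψ^{[q^ν]}` converges in `M_{r×m}(B)`, it satisfies
`Φ - Δ₀ Φ^{[q]} = Ψ` and `‖Φ‖ = ‖Ψ‖`, and `Φ` is the unique solution of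
`X - Δ₀ X^{[q]} = Ψ` with `‖X‖ < 1`. -/
theorem statement5
    (p n q : ℕ) [Fact p.Prime] (hn : n ≠ 0) (hq : q = p ^ n)
    (B : Type) [NormedCommRing B] [NormOneClass B] [IsUltrametricDist B] [CompleteSpace B]
    [Algebra (GaloisField p n) B]
    (r m : ℕ) (hr : 1 ≤ r) (hm : 1 ≤ m)
    (Δ₀ : Matrix (Fin r) (Fin r) B) (hΔ₀ : matNorm Δ₀ ≤ 1)
    (Ψ : Matrix (Fin r) (Fin m) B) (hΨ : matNorm Ψ < 1) :
    ∃ Φ : Matrix (Fin r) (Fin m) B,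
      Filter.Tendsto
        (fun N => matNorm
          ((∑ ν ∈ Finset.range N,
              ((List.range ν).map (fun k => Δ₀.map (· ^ q ^ k))).prod * Ψ.map (· ^ q ^ ν))
            - Φ))
        Filter.atTop (nhds 0) ∧
      Φ - Δ₀ * Φ.map (· ^ q) = Ψ ∧
      matNorm Φ = matNorm Ψ ∧
      ∀ X : Matrix (Fin r) (Fin m) B,
        X - Δ₀ * X.map (· ^ q) = Ψ → matNorm X < 1 → X = Φ :=
  statement5_general p n q hn hq B r m Δ₀ hΔ₀ Ψ hΨ
end

section
/- Let q be a power of a prime p and let B be a commutative 𝔽_q-algebra with a nonarchimedean ring norm ‖·‖. Let r, m ≥ 1, let Δ : ℕ → M_r(B) with ‖Δ_ν‖ ≤ 1 for all ν and ‖Δ_ν‖ → 0 as ν → ∞, and let Ω : ℕ → M_{r×m}(B) with ‖Ω_n‖ → 0 as n → ∞. Suppose Φ : ℕ → M_{r×m}(B) satisfies Φ_n − Δ₀·Φ_n^{[q]} = Ω_n + ∑_{ν=1}^{n} Δ_ν·Φ_{n−ν}^{[q]} for every n ≥ 0, that sup_n ‖Φ_n‖ < ∞, and that limsup_{n→∞}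 ‖Φ_n‖ < 1. Then ‖Φ_n‖ → 0 as n → ∞. -/
section aux

variable {ι κ σ α : Type*} [Fintype ι] [Fintype κ] [Fintype σ]
variable {B : Type} [NormedCommRing B] [IsUltrametricDist B]

lemma matNorm_nonneg (M : Matrix ι κ B) : 0 ≤ matNorm M :=
  Real.iSup_nonneg fun _ => Real.iSup_nonneg fun _ => norm_nonneg _

lemma entry_le_matNorm (M : Matrix ι κ B) (i : ι) (j : κ) : ‖M i j‖ ≤ matNorm M := by
  refine le_trans (le_ciSup (f := fun j => ‖M i j‖) (Set.Finite.bddAbove (Set.finite_range _)) j) ?_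
  exact le_ciSup (f := fun i => ⨆ j, ‖M i j‖) (Set.Finite.bddAbove (Set.finite_range _)) i

lemma matNorm_le {C : ℝ} (hC : 0 ≤ C) (M : Matrix ι κ B) (h : ∀ i j, ‖M i j‖ ≤ C) :
    matNorm M ≤ C :=
  Real.iSup_le (fun i => Real.iSup_le (h i) hC) hC

lemma matNorm_mul_le (A : Matrix ι κ B) (M : Matrix κ σ B) :
    matNorm (A * M) ≤ matNorm A * matNorm M := by
  refine matNorm_le (mul_nonneg (matNorm_nonneg A) (matNorm_nonneg M)) _ fun i j => ?_
  rw [Matrix.mul_apply]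
  refine IsUltrametricDist.norm_sum_le_of_forall_le_of_nonneg
    (mul_nonneg (matNorm_nonneg A) (matNorm_nonneg M)) fun k _ => ?_
  exact (norm_mul_le _ _).trans
    (mul_le_mul (entry_le_matNorm A i k) (entry_le_matNorm M k j) (norm_nonneg _)
      (matNorm_nonneg A))

lemma matNorm_add_le_max (A M : Matrix ι κ B) :
    matNorm (A + M) ≤ max (matNorm A) (matNorm M) := by
  refine matNorm_le (le_max_of_le_left (matNorm_nonneg A)) _ fun i j => ?_
  exact (IsUltrametricDist.norm_add_le_max _ _).trans
    (max_le_max (entry_le_matNorm A i j) (entry_le_matNorm M i j))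

lemma matNorm_sum_le {s : Finset α} {f : α → Matrix ι κ B} {C : ℝ} (hC : 0 ≤ C)
    (h : ∀ a ∈ s, matNorm (f a) ≤ C) : matNorm (∑ a ∈ s, f a) ≤ C := by
  refine matNorm_le hC _ fun i j => ?_
  rw [Matrix.sum_apply]
  exact IsUltrametricDist.norm_sum_le_of_forall_le_of_nonneg hC fun a ha =>
    (entry_le_matNorm (f a) i j).trans (h a ha)

lemma matNorm_map_pow (M : Matrix ι κ B) {q : ℕ} (hq : 0 < q) :
    matNorm (M.map (· ^ q)) ≤ matNorm M ^ q := by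
  refine matNorm_le (pow_nonneg (matNorm_nonneg M) q) _ fun i j => ?_
  exact (norm_pow_le' _ hq).trans (pow_le_pow_left₀ (norm_nonneg _) (entry_le_matNorm M i j) q)

end aux

/-- Let `q = pⁿ` and let `B` be a commutative `𝔽_q`-algebra with a
nonarchimedean ring norm.  Let `Δ : ℕ → M_r(B)` with `‖Δ_ν‖ ≤ 1` for all `ν` and `‖Δ_ν‖ → 0`,
and let `Ω : ℕ → M_{r×m}(B)` with `‖Ω_k‖ → 0`.  Suppose `Φ : ℕ → M_{r×m}(B)` satisfies
`Φ_k - Δ₀ Φ_k^{[q]} = Ω_k + ∑_{ν=1}^{k} Δ_ν Φ_{k-ν}^{[q]}` for every `k ≥ 0`, that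
`sup_k ‖Φ_k‖ < ∞`, and that `limsup_k ‖Φ_k‖ < 1`.  Then `‖Φ_k‖ → 0`. -/
theorem statement6
    (p n q : ℕ) [Fact p.Prime] (hn : n ≠ 0) (hq : q = p ^ n)
    (B : Type) [NormedCommRing B] [NormOneClass B] [IsUltrametricDist B]
    [Algebra (GaloisField p n) B]
    (r m : ℕ) (hr : 1 ≤ r) (hm : 1 ≤ m)
    (Δ : ℕ → Matrix (Fin r) (Fin r) B)
    (hΔ1 : ∀ ν, matNorm (Δ ν) ≤ 1)
    (hΔ0 : Filter.Tendsto (fun ν => matNorm (Δ ν)) Filter.atTop (nhds 0))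
    (Ω : ℕ → Matrix (Fin r) (Fin m) B)
    (hΩ : Filter.Tendsto (fun k => matNorm (Ω k)) Filter.atTop (nhds 0))
    (Φ : ℕ → Matrix (Fin r) (Fin m) B)
    (hrec : ∀ k : ℕ,
      Φ k - Δ 0 * (Φ k).map (· ^ q)
        = Ω k + ∑ ν ∈ Finset.Icc 1 k, Δ ν * (Φ (k - ν)).map (· ^ q))
    (hbdd : BddAbove (Set.range fun k => matNorm (Φ k)))
    (hlimsup : Filter.limsup (fun k => matNorm (Φ k)) Filter.atTop < 1) :
    Filter.Tendsto (fun k => matNorm (Φ k)) Filter.atTop (nhds 0) := by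
  have hp2 : 2 ≤ p := (Fact.out : p.Prime).two_le
  have hq2 : 2 ≤ q := by
    rw [hq]; exact hp2.trans (Nat.le_self_pow hn p)
  have hq0 : 0 < q := by omega
  set a : ℕ → ℝ := fun k => matNorm (Φ k) with ha
  have ha0 : ∀ k, 0 ≤ a k := fun k => matNorm_nonneg _
  obtain ⟨C, hC⟩ := hbdd
  have hC' : ∀ k, a k ≤ C := fun k => hC ⟨k, rfl⟩
  have hC0 : 0 ≤ C := (ha0 0).trans (hC' 0)
  have hbu : Filter.IsBoundedUnder (· ≤ ·) Filter.atTop a :=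
    ⟨C, Filter.eventually_map.mpr (Filter.Eventually.of_forall hC')⟩
  have hcb : Filter.IsCoboundedUnder (· ≤ ·) Filter.atTop a :=
    Filter.IsBoundedUnder.isCoboundedUnder_le ⟨0, Filter.eventually_map.mpr (Filter.Eventually.of_forall ha0)⟩
  set L := Filter.limsup a Filter.atTop with hL
  -- key step: for any 0 ≤ t < 1 with L < t, we get L ≤ t ^ q
  have key : ∀ t : ℝ, 0 ≤ t → L < t → t < 1 → L ≤ t ^ q := by
    intro t ht0 hLt ht1
    have main : ∀ ε : ℝ, 0 < ε → L ≤ max (t ^ q) ε := by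
      intro ε hε
      obtain ⟨K₀, hK₀⟩ := Filter.eventually_atTop.mp (Filter.eventually_lt_of_limsup_lt hLt hbu)
      have hδpos : 0 < ε / (C ^ q + 1) := by positivity
      obtain ⟨N, hN⟩ := Filter.eventually_atTop.mp (hΔ0.eventually_lt_const hδpos)
      obtain ⟨K₁, hK₁⟩ := Filter.eventually_atTop.mp (hΩ.eventually_lt_const hε)
      set M := max (t ^ q) ε with hMdef
      have hM0 : 0 ≤ M := le_max_of_le_right hε.le
      have htq : 0 ≤ t ^ q := pow_nonneg ht0 q
      refine Filter.limsup_le_of_le hcb ?_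
      rw [Filter.eventually_atTop]
      refine ⟨K₀ + N + K₁, fun k hk => ?_⟩
      have hPhi : Φ k = (Ω k + ∑ ν ∈ Finset.Icc 1 k, Δ ν * (Φ (k - ν)).map (· ^ q))
          + Δ 0 * (Φ k).map (· ^ q) := by
        rw [← hrec k]; abel
      have hsum : matNorm (Ω k + ∑ ν ∈ Finset.Icc 1 k, Δ ν * (Φ (k - ν)).map (· ^ q)) ≤ M := by
        refine (matNorm_add_le_max _ _).trans (max_le ?_ ?_)
        · exact le_max_of_le_right ((hK₁ k (by omega)).le)
        · refine matNorm_sum_le hM0 fun ν hν => ?_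
          simp only [Finset.mem_Icc] at hν
          refine (matNorm_mul_le _ _).trans ?_
          have hmap : matNorm ((Φ (k - ν)).map (· ^ q)) ≤ a (k - ν) ^ q :=
            matNorm_map_pow _ hq0
          by_cases hcase : K₀ ≤ k - ν
          · have h1 : a (k - ν) ≤ t := (hK₀ _ hcase).le
            have h2 : a (k - ν) ^ q ≤ t ^ q := pow_le_pow_left₀ (ha0 _) h1 q
            refine le_max_of_le_left ?_
            calc matNorm (Δ ν) * matNorm ((Φ (k - ν)).map (· ^ q))
                ≤ 1 * (a (k - ν) ^ q) := by
                  exact mul_le_mul (hΔ1 ν) hmap (matNorm_nonneg _) zero_le_one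
              _ ≤ t ^ q := by rw [one_mul]; exact h2
          · have hνN : N ≤ ν := by omega
            have hΔν : matNorm (Δ ν) ≤ ε / (C ^ q + 1) := (hN ν hνN).le
            have hCq : a (k - ν) ^ q ≤ C ^ q := pow_le_pow_left₀ (ha0 _) (hC' _) q
            refine le_max_of_le_right ?_
            calc matNorm (Δ ν) * matNorm ((Φ (k - ν)).map (· ^ q))
                ≤ (ε / (C ^ q + 1)) * C ^ q := by
                  exact mul_le_mul hΔν (hmap.trans hCq) (matNorm_nonneg _) hδpos.le
              _ ≤ ε := by
                  rw [div_mul_eq_mul_div, div_le_iff₀ (by positivity)]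
                  nlinarith [pow_nonneg hC0 q]
      have hfirst : matNorm (Δ 0 * (Φ k).map (· ^ q)) ≤ t ^ (q - 1) * a k := by
        refine (matNorm_mul_le _ _).trans ?_
        have h1 : matNorm (Δ 0) * matNorm ((Φ k).map (· ^ q)) ≤ 1 * a k ^ q :=
          mul_le_mul (hΔ1 0) (matNorm_map_pow _ hq0) (matNorm_nonneg _) zero_le_one
        rw [one_mul] at h1
        refine h1.trans ?_
        have hak : a k ≤ t := (hK₀ k (by omega)).le
        have : a k ^ q = a k ^ (q - 1) * a k := by
          rw [← pow_succ]; congr 1; omega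
        rw [this]
        exact mul_le_mul_of_nonneg_right (pow_le_pow_left₀ (ha0 k) hak _) (ha0 k)
      have hmain : a k ≤ max M (t ^ (q - 1) * a k) := by
        calc a k = matNorm (Φ k) := rfl
          _ ≤ _ := by rw [hPhi]; exact (matNorm_add_le_max _ _).trans (max_le_max hsum hfirst)
      rcases le_max_iff.mp hmain with h | h
      · exact h
      · have ht' : t ^ (q - 1) < 1 := pow_lt_one₀ ht0 ht1 (by omega)
        nlinarith [ha0 k]
    refine le_of_forall_pos_le_add fun ε hε => ?_
    exact (main ε hε).trans (max_le (le_add_of_nonneg_right hε.le)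
      (le_add_of_nonneg_left (pow_nonneg ht0 q)))
  have hL0 : L ≤ 0 := by
    by_contra h
    push_neg at h
    have hL1 : L < 1 := hlimsup
    set s := Real.sqrt L with hs
    have hs1 : s < 1 := by
      rw [hs, show (1:ℝ) = Real.sqrt 1 by simp]
      exact Real.sqrt_lt_sqrt h.le hL1
    have hLs : L < s := by
      rw [hs]
      nlinarith [Real.sq_sqrt h.le, Real.sqrt_nonneg L]
    set t := (L + s) / 2 with ht
    have ht0 : 0 ≤ t := by positivity
    have hLt : L < t := by simp only [ht]; linarith
    have hts : t < s := by simp only [ht]; linarith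
    have ht1 : t < 1 := hts.trans hs1
    have hkey := key t ht0 hLt ht1
    have h2 : t ^ q ≤ t ^ 2 := pow_le_pow_of_le_one ht0 ht1.le hq2
    have h3 : t ^ 2 < L := by
      have : t ^ 2 < s ^ 2 := by nlinarith
      nlinarith [Real.sq_sqrt h.le]
    linarith
  refine tendsto_order.2 ⟨fun b hb => Filter.Eventually.of_forall fun k => lt_of_lt_of_le hb (ha0 k),
    fun b hb => ?_⟩
  exact Filter.eventually_lt_of_limsup_lt (lt_of_le_of_lt hL0 hb) hbu
end
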